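/- Let W₁,...,W_m be mutually unbiased weighing matrices of order n and weight k over the integers, let p be a prime dividing √k, and reduce modulo p. Then over F_q (q = p^r), W_iW_jᵀ ≡ 0 for all i,j, and consequently for any nonzero X, Y in the matrix algebra generated by the reductions of the W_i and any nonzero α_x, α_y ∈ F_q, [X | α_x I_n]·[Y | α_y I_n]ᵀ = α_x α_y I_n is nonsingular; the set of row spaces of such matrices is an LCD subspace code in F_q^{2n}. -/

import Mathlib

/-!
Since `p ∣ √k ∣ k`, both `W_i W_iᵀ = k I` and `W_i W_jᵀ = √k W'` vanish modulo `p`. The relation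
`X Yᵀ = 0` is bilinear and survives multiplying `X` on the right or `Y` on the left, so it holds
on the whole algebra generated by the reductions. Then `[X | αx I] [Y | αy I]ᵀ = X Yᵀ + αx αy I`
is the invertible scalar `αx αy I`, and a vector `w [X | αx I]` orthogonal to all rows of
`[Y | αy I]` has `w (αx αy I) = 0`, so `w = 0`.
-/

open Matrix

/-- The Euclidean dual of a linear code `C ⊆ F^ι`:
all vectors orthogonal (w.r.t. the standard bilinear form) to every codeword. -/
def dualCode (F : Type*) [Field F] {ι : Type*} [Fintype ι]
    (C : Submodule F (ι → F)) : Submodule F (ι → F) where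
  carrier := {v | ∀ c ∈ C, v ⬝ᵥ c = 0}
  add_mem' := by
    intro a b ha hb c hc
    simp [add_dotProduct, ha c hc, hb c hc]
  zero_mem' := by intro c hc; simp
  smul_mem' := by
    intro r a ha c hc
    simp [smul_dotProduct, ha c hc]

/-- The row space of a matrix: the span of its rows. -/
def rowSpace (F : Type*) [Field F] {κ ι : Type*} (G : Matrix κ ι F) :
    Submodule F (ι → F) := Submodule.span F (Set.range fun k => G k)

lemma mem_rowSpace_iff {F : Type*} [Field F] {κ ι : Type*} [Fintype κ] {G : Matrix κ ι F}
    {v : ι → F} : v ∈ rowSpace F G ↔ ∃ w, w ᵥ* G = v := by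
  change v ∈ Submodule.span F (Set.range G.row) ↔ _
  rw [← range_vecMulLinear]
  rfl

lemma mem_dualCode_rowSpace_iff {F : Type*} [Field F] {κ ι : Type*} [Fintype ι]
    {G : Matrix κ ι F} {v : ι → F} : v ∈ dualCode F (rowSpace F G) ↔ G *ᵥ v = 0 := by
  refine ⟨fun hv => funext fun a => ?_, fun hv c hc => ?_⟩
  · rw [mulVec, dotProduct_comm]
    exact hv (G a) (Submodule.subset_span ⟨a, rfl⟩)
  · refine Submodule.span_induction ?_ (dotProduct_zero v) (fun x y _ _ hx hy => ?_)
      (fun r x _ hx => ?_) hc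
    · rintro _ ⟨a, rfl⟩
      rw [dotProduct_comm]
      exact congrFun hv a
    · rw [dotProduct_add, hx, hy, add_zero]
    · rw [dotProduct_smul, hx, smul_zero]

lemma rowSpace_inf_dualCode_rowSpace_eq_bot {F : Type*} [Field F] {κ ι : Type*} [Fintype κ]
    [DecidableEq κ] [Fintype ι] {G₁ G₂ : Matrix κ ι F} (h : IsUnit (G₁ * G₂ᵀ)) :
    rowSpace F G₁ ⊓ dualCode F (rowSpace F G₂) = ⊥ := by
  refine (Submodule.eq_bot_iff _).mpr fun v ⟨hv₁, hv₂⟩ => ?_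
  obtain ⟨w, rfl⟩ := mem_rowSpace_iff.mp hv₁
  have hw : w ᵥ* (G₁ * G₂ᵀ) = 0 ᵥ* (G₁ * G₂ᵀ) := by
    rw [← vecMul_vecMul, vecMul_transpose, mem_dualCode_rowSpace_iff.mp hv₂, zero_vecMul]
  rw [vecMul_injective_iff_isUnit.mpr h hw, zero_vecMul]

lemma fromCols_mul_transpose_fromCols {R : Type*} [Semiring R] {m n₁ n₂ m' : Type*}
    [Fintype n₁] [Fintype n₂] (A₁ : Matrix m n₁ R) (A₂ : Matrix m n₂ R) (B₁ : Matrix m' n₁ R)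
    (B₂ : Matrix m' n₂ R) : fromCols A₁ A₂ * (fromCols B₁ B₂)ᵀ = A₁ * B₁ᵀ + A₂ * B₂ᵀ := by
  rw [transpose_fromCols, fromCols_mul_fromRows]

lemma fromCols_smul_one_mul_transpose {R : Type*} [CommSemiring R] {n : Type*} [Fintype n]
    [DecidableEq n] {X Y : Matrix n n R} (hXY : X * Yᵀ = 0) (a b : R) :
    fromCols X (a • (1 : Matrix n n R)) * (fromCols Y (b • (1 : Matrix n n R)))ᵀ =
      (a * b) • (1 : Matrix n n R) := by
  rw [fromCols_mul_transpose_fromCols, hXY, zero_add, transpose_smul, transpose_one,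
    smul_mul_smul_comm, one_mul]

lemma mul_transpose_eq_zero_of_mem_adjoin {R : Type*} [CommSemiring R] {n : Type*} [Fintype n]
    {S : Set (Matrix n n R)} (hS : ∀ x ∈ S, ∀ y ∈ S, x * yᵀ = 0) {X Y : Matrix n n R}
    (hX : X ∈ NonUnitalAlgebra.adjoin R S) (hY : Y ∈ NonUnitalAlgebra.adjoin R S) :
    X * Yᵀ = 0 := by
  induction hX, hY using NonUnitalAlgebra.adjoin_induction₂ with
  | mem_mem x y hx hy => exact hS x hx y hy
  | zero_left => rw [zero_mul]
  | zero_right => rw [transpose_zero, mul_zero]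
  | add_left _ _ _ _ _ _ h₁ h₂ => rw [add_mul, h₁, h₂, add_zero]
  | add_right _ _ _ _ _ _ h₁ h₂ => rw [transpose_add, mul_add, h₁, h₂, add_zero]
  | mul_left _ _ _ _ _ _ _ h => rw [mul_assoc, h, mul_zero]
  | mul_right _ _ _ _ _ _ _ h => rw [transpose_mul, ← mul_assoc, h, zero_mul]
  | smul_left _ _ _ _ _ h => rw [smul_mul_assoc, h, smul_zero]
  | smul_right _ _ _ _ _ h => rw [transpose_smul, mul_smul_comm, h, smul_zero]

lemma map_intCast_mul_transpose_eq_zero {F : Type*} [Ring F] {m n o : Type*} [Fintype n]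
    {A : Matrix m n ℤ} {B : Matrix o n ℤ} {c : ℤ} {C : Matrix m o ℤ} (h : A * Bᵀ = c • C)
    (hc : (c : F) = 0) :
    A.map (Int.cast : ℤ → F) * (B.map (Int.cast : ℤ → F))ᵀ = 0 := by
  calc A.map (Int.cast : ℤ → F) * (B.map (Int.cast : ℤ → F))ᵀ
      = (A * Bᵀ).map (Int.castRingHom F) := by rw [Matrix.map_mul, transpose_map]; rfl
    _ = 0 := by ext a b; simp [h, hc]

theorem stmt13_general (F : Type*) [Field F] {p : ℕ}
    [CharP F p] {n k s m : ℕ} (hs : s * s = k) (hps : p ∣ s)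
    (W : Fin m → Matrix (Fin n) (Fin n) ℤ)
    (hW : ∀ i, W i * (W i)ᵀ = (k : ℤ) • 1)
    (hunb : ∀ i j, i ≠ j → ∃ W' : Matrix (Fin n) (Fin n) ℤ,
      (∀ a b, W' a b = -1 ∨ W' a b = 0 ∨ W' a b = 1) ∧
        W' * W'ᵀ = (k : ℤ) • 1 ∧ W i * (W j)ᵀ = (s : ℤ) • W') :
    (∀ i j, (W i).map (Int.cast : ℤ → F) * ((W j).map (Int.cast : ℤ → F))ᵀ = 0) ∧
      ∀ X Y : Matrix (Fin n) (Fin n) F,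
        X ∈ NonUnitalAlgebra.adjoin F
          (Set.range fun i => (W i).map (Int.cast : ℤ → F)) → X ≠ 0 →
        Y ∈ NonUnitalAlgebra.adjoin F
          (Set.range fun i => (W i).map (Int.cast : ℤ → F)) → Y ≠ 0 →
        ∀ αx αy : F, αx ≠ 0 → αy ≠ 0 →
          fromCols X (αx • (1 : Matrix (Fin n) (Fin n) F)) * (fromCols Y (αy • (1 : Matrix (Fin n) (Fin n) F)))ᵀ = (αx * αy) • 1 ∧
            IsUnit (fromCols X (αx • (1 : Matrix (Fin n) (Fin n) F)) * (fromCols Y (αy • (1 : Matrix (Fin n) (Fin n) F)))ᵀ) ∧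
            rowSpace F (fromCols X (αx • (1 : Matrix (Fin n) (Fin n) F))) ⊓
              dualCode F (rowSpace F (fromCols Y (αy • (1 : Matrix (Fin n) (Fin n) F)))) = ⊥ := by
  have hs₀ : ((s : ℤ) : F) = 0 := (CharP.intCast_eq_zero_iff F p _).mpr (by exact_mod_cast hps)
  have hk₀ : ((k : ℤ) : F) = 0 := by rw [← hs]; push_cast at hs₀ ⊢; rw [hs₀, zero_mul]
  have hzero : ∀ i j, (W i).map (Int.cast : ℤ → F) * ((W j).map (Int.cast : ℤ → F))ᵀ = 0 := by
    intro i j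
    rcases eq_or_ne i j with rfl | hij
    · exact map_intCast_mul_transpose_eq_zero (hW i) hk₀
    · obtain ⟨W', -, -, hWij⟩ := hunb i j hij
      exact map_intCast_mul_transpose_eq_zero hWij hs₀
  refine ⟨hzero, fun X Y hX _ hY _ αx αy hαx hαy => ?_⟩
  have hXY : X * Yᵀ = 0 := mul_transpose_eq_zero_of_mem_adjoin
    (by rintro _ ⟨i, rfl⟩ _ ⟨j, rfl⟩; exact hzero i j) hX hY
  have hprod := fromCols_smul_one_mul_transpose hXY αx αy
  have hunit : IsUnit ((αx * αy) • (1 : Matrix (Fin n) (Fin n) F)) := by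
    rw [← Algebra.algebraMap_eq_smul_one]
    exact (mul_ne_zero hαx hαy).isUnit.map _
  rw [← hprod] at hunit
  exact ⟨hprod, hunit, rowSpace_inf_dualCode_rowSpace_eq_bot hunit⟩

/-- Mutually unbiased weighing matrices of order `n`, weight `k`,
`p ∣ √k`, reduced mod `p`: `W_i W_jᵀ ≡ 0`, `[X|αx I][Y|αy I]ᵀ = αx αy I` is
nonsingular, and the row spaces form an LCD subspace code in `F_q^{2n}`. -/
theorem stmt13 (F : Type*) [Field F] [Fintype F] {p : ℕ} (hp : p.Prime)
    [CharP F p] {n k s m : ℕ} (hs : s * s = k) (hps : p ∣ s)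
    (W : Fin m → Matrix (Fin n) (Fin n) ℤ)
    (hent : ∀ i a b, W i a b = -1 ∨ W i a b = 0 ∨ W i a b = 1)
    (hW : ∀ i, W i * (W i)ᵀ = (k : ℤ) • 1)
    (hunb : ∀ i j, i ≠ j → ∃ W' : Matrix (Fin n) (Fin n) ℤ,
      (∀ a b, W' a b = -1 ∨ W' a b = 0 ∨ W' a b = 1) ∧
        W' * W'ᵀ = (k : ℤ) • 1 ∧ W i * (W j)ᵀ = (s : ℤ) • W') :
    (∀ i j, (W i).map (Int.cast : ℤ → F) * ((W j).map (Int.cast : ℤ → F))ᵀ = 0) ∧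
      ∀ X Y : Matrix (Fin n) (Fin n) F,
        X ∈ NonUnitalAlgebra.adjoin F
          (Set.range fun i => (W i).map (Int.cast : ℤ → F)) → X ≠ 0 →
        Y ∈ NonUnitalAlgebra.adjoin F
          (Set.range fun i => (W i).map (Int.cast : ℤ → F)) → Y ≠ 0 →
        ∀ αx αy : F, αx ≠ 0 → αy ≠ 0 →
          fromCols X (αx • (1 : Matrix (Fin n) (Fin n) F)) * (fromCols Y (αy • (1 : Matrix (Fin n) (Fin n) F)))ᵀ = (αx * αy) • 1 ∧
            IsUnit (fromCols X (αx • (1 : Matrix (Fin n) (Fin n) F)) * (fromCols Y (αy • (1 : Matrix (Fin n) (Fin n) F)))ᵀ) ∧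
            rowSpace F (fromCols X (αx • (1 : Matrix (Fin n) (Fin n) F))) ⊓
              dualCode F (rowSpace F (fromCols Y (αy • (1 : Matrix (Fin n) (Fin n) F)))) = ⊥ :=
  stmt13_general F hs hps W hW hunb
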